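/- Let $\Omega\subseteq\mathbb{R}^n$ be a bounded set and $\delta\in(0,n]$. For every function $f:\Omega\to[-\infty,\infty]$, $\lim_{p\to\infty}\Big(\int_\Omega |f|^p\,d\mathcal{H}^{\delta}_\infty\Big)^{1/p} = \mathcal{H}^{\delta}_\infty\text{-}\operatorname{esssup}_{x\in\Omega}|f(x)|$. -/

import Mathlib

open MeasureTheory Metric Set ENNReal

/-- δ-dimensional Hausdorff content via countable ball coverings. -/
noncomputable def hc (n : ℕ) (δ : ℝ) (E : Set (EuclideanSpace ℝ (Fin n))) : ℝ≥0∞ :=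
  ⨅ (c : ℕ → EuclideanSpace ℝ (Fin n)) (r : ℕ → ℝ) (_ : ∀ i, 0 < r i)
    (_ : E ⊆ ⋃ i, ball (c i) (r i)), ∑' i, ENNReal.ofReal (r i ^ δ)

/-- Choquet integral of a nonnegative function over Ω with respect to `hc n δ`. -/
noncomputable def choquet (n : ℕ) (δ : ℝ) (Ω : Set (EuclideanSpace ℝ (Fin n)))
    (f : EuclideanSpace ℝ (Fin n) → ℝ≥0∞) : ℝ≥0∞ :=
  ∫⁻ t in Ioi (0:ℝ), hc n δ {x | x ∈ Ω ∧ ENNReal.ofReal t < f x}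

lemma hc_mono {n : ℕ} {δ : ℝ} {E F : Set (EuclideanSpace ℝ (Fin n))} (h : E ⊆ F) :
    hc n δ E ≤ hc n δ F := by
  refine le_iInf fun c => le_iInf fun r => le_iInf fun hr => le_iInf fun hcov => ?_
  exact iInf_le_of_le c (iInf_le_of_le r (iInf_le_of_le hr
    (iInf_le_of_le (h.trans hcov) le_rfl)))

lemma hc_lt_top {n : ℕ} {δ : ℝ} (hδ : 0 < δ) {Ω : Set (EuclideanSpace ℝ (Fin n))}
    (hΩ : Bornology.IsBounded Ω) : hc n δ Ω < ⊤ := by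
  obtain ⟨R, hR0, hRsub⟩ := hΩ.subset_ball_lt 0 0
  have key : hc n δ Ω ≤ ∑' i : ℕ, ENNReal.ofReal ((R * (1/2)^i) ^ δ) := by
    refine iInf_le_of_le (fun _ => (0 : EuclideanSpace ℝ (Fin n)))
      (iInf_le_of_le (fun i => R * (1/2)^i) (iInf_le_of_le (fun i => by positivity)
      (iInf_le_of_le ?_ le_rfl)))
    refine hRsub.trans (subset_iUnion_of_subset 0 ?_)
    simp
  refine lt_of_le_of_lt key ?_
  have heq : ∀ i : ℕ, ENNReal.ofReal ((R * (1/2)^i) ^ δ)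
      = ENNReal.ofReal (R ^ δ) * (ENNReal.ofReal ((1/2 : ℝ) ^ δ)) ^ i := by
    intro i
    rw [Real.mul_rpow hR0.le (by positivity), ENNReal.ofReal_mul (by positivity)]
    congr 1
    rw [← Real.rpow_natCast ((1/2:ℝ)) i, ← Real.rpow_mul (by norm_num), mul_comm,
      Real.rpow_mul (by norm_num), Real.rpow_natCast,
      ENNReal.ofReal_pow (by positivity)]
  simp only [heq]
  rw [ENNReal.tsum_mul_left, ENNReal.tsum_geometric]
  have hq : ENNReal.ofReal ((1/2 : ℝ) ^ δ) < 1 := by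
    rw [← ENNReal.ofReal_one]
    exact (ENNReal.ofReal_lt_ofReal_iff (by norm_num)).mpr
      (Real.rpow_lt_one (by norm_num) (by norm_num) hδ)
  exact ENNReal.mul_lt_top ENNReal.ofReal_lt_top
    (ENNReal.inv_lt_top.mpr (tsub_pos_of_lt hq))

lemma tendsto_rpow_one_div_nhds_one {h : ℝ≥0∞} (h0 : h ≠ 0) (ht : h ≠ ⊤) :
    Filter.Tendsto (fun p : ℝ => h ^ (1/p)) Filter.atTop (nhds 1) := by
  have hpos : 0 < h.toReal := ENNReal.toReal_pos h0 ht
  have h1 : Filter.Tendsto (fun p : ℝ => h.toReal ^ (1/p)) Filter.atTop (nhds 1) := by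
    have hinv : Filter.Tendsto (fun p : ℝ => 1/p) Filter.atTop (nhds 0) := by
      simpa [one_div] using tendsto_inv_atTop_zero (𝕜 := ℝ)
    have hcont : ContinuousAt (fun y : ℝ => h.toReal ^ y) 0 :=
      Real.continuousAt_const_rpow hpos.ne'
    simpa [Real.rpow_zero, Function.comp_def] using hcont.tendsto.comp hinv
  have h2 : Filter.Tendsto (fun p : ℝ => ENNReal.ofReal (h.toReal ^ (1/p)))
      Filter.atTop (nhds (ENNReal.ofReal 1)) :=
    (ENNReal.continuous_ofReal.tendsto 1).comp h1
  have heq : ∀ p : ℝ, ENNReal.ofReal (h.toReal ^ (1/p)) = h ^ (1/p) := by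
    intro p
    rw [← ENNReal.ofReal_rpow_of_pos hpos, ENNReal.ofReal_toReal ht]
  simp only [heq] at h2
  simpa using h2

lemma choquet_rpow_le {n : ℕ} {δ : ℝ} {Ω : Set (EuclideanSpace ℝ (Fin n))}
    {g : EuclideanSpace ℝ (Fin n) → ℝ≥0∞} {r p : ℝ} (hr : 0 < r) (hp : 0 < p)
    (h0 : hc n δ {x | x ∈ Ω ∧ ENNReal.ofReal r < g x} = 0) :
    choquet n δ Ω (fun x => g x ^ p) ≤ hc n δ Ω * ENNReal.ofReal (r ^ p) := by
  have hbound : ∀ t ∈ Ioi (0:ℝ),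
      hc n δ {x | x ∈ Ω ∧ ENNReal.ofReal t < g x ^ p}
        ≤ (Ioc (0:ℝ) (r ^ p)).indicator (fun _ => hc n δ Ω) t := by
    intro t ht
    by_cases htr : t ≤ r ^ p
    · rw [Set.indicator_of_mem (show t ∈ Ioc (0:ℝ) (r ^ p) from ⟨ht, htr⟩)]
      exact hc_mono (fun x hx => hx.1)
    · rw [indicator_of_notMem (fun hmem => htr hmem.2)]
      push_neg at htr
      refine le_of_le_of_eq (hc_mono ?_) h0
      rintro x ⟨hxΩ, hxt⟩
      refine ⟨hxΩ, ?_⟩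
      by_contra hle
      push_neg at hle
      have hle2 : g x ^ p ≤ ENNReal.ofReal t := by
        calc g x ^ p ≤ (ENNReal.ofReal r) ^ p := ENNReal.rpow_le_rpow hle hp.le
        _ = ENNReal.ofReal (r ^ p) := ENNReal.ofReal_rpow_of_pos hr
        _ ≤ ENNReal.ofReal t := ENNReal.ofReal_le_ofReal htr.le
      exact absurd hxt (not_lt.2 hle2)
  calc choquet n δ Ω (fun x => g x ^ p)
      ≤ ∫⁻ t in Ioi (0:ℝ), (Ioc (0:ℝ) (r ^ p)).indicator (fun _ => hc n δ Ω) t := by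
        refine lintegral_mono_ae ?_
        rw [ae_restrict_iff' measurableSet_Ioi]
        exact Filter.Eventually.of_forall hbound
    _ = hc n δ Ω * ENNReal.ofReal (r ^ p) := by
        rw [lintegral_indicator measurableSet_Ioc _, Measure.restrict_restrict measurableSet_Ioc,
          setLIntegral_const, inter_eq_left.2 Ioc_subset_Ioi_self, Real.volume_Ioc, sub_zero]

lemma le_choquet_rpow {n : ℕ} {δ : ℝ} {Ω : Set (EuclideanSpace ℝ (Fin n))}
    {g : EuclideanSpace ℝ (Fin n) → ℝ≥0∞} {c p : ℝ} (hcc : 0 < c) (hp : 0 < p) :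
    hc n δ {x | x ∈ Ω ∧ ENNReal.ofReal c < g x} * ENNReal.ofReal (c ^ p)
      ≤ choquet n δ Ω (fun x => g x ^ p) := by
  set h := hc n δ {x | x ∈ Ω ∧ ENNReal.ofReal c < g x} with hh
  have hbound : ∀ t ∈ Ioi (0:ℝ),
      (Ioo (0:ℝ) (c ^ p)).indicator (fun _ => h) t
        ≤ hc n δ {x | x ∈ Ω ∧ ENNReal.ofReal t < g x ^ p} := by
    intro t _
    by_cases htm : t ∈ Ioo (0:ℝ) (c ^ p)
    · rw [indicator_of_mem htm]
      refine hc_mono ?_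
      rintro x ⟨hxΩ, hxc⟩
      refine ⟨hxΩ, ?_⟩
      calc ENNReal.ofReal t < ENNReal.ofReal (c ^ p) :=
            (ENNReal.ofReal_lt_ofReal_iff (by positivity)).mpr htm.2
        _ = (ENNReal.ofReal c) ^ p := (ENNReal.ofReal_rpow_of_pos hcc).symm
        _ ≤ g x ^ p := ENNReal.rpow_le_rpow hxc.le hp.le
    · rw [indicator_of_notMem htm]
      exact zero_le
  calc h * ENNReal.ofReal (c ^ p)
      = ∫⁻ t in Ioi (0:ℝ), (Ioo (0:ℝ) (c ^ p)).indicator (fun _ => h) t := by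
        rw [lintegral_indicator measurableSet_Ioo _, Measure.restrict_restrict measurableSet_Ioo,
          setLIntegral_const, inter_eq_left.2 Ioo_subset_Ioi_self, Real.volume_Ioo, sub_zero]
    _ ≤ choquet n δ Ω (fun x => g x ^ p) := by
        refine lintegral_mono_ae ?_
        rw [ae_restrict_iff' measurableSet_Ioi]
        exact Filter.Eventually.of_forall hbound

lemma mul_ofReal_rpow_aux {h : ℝ≥0∞} {c p : ℝ} (hcpos : 0 < c) (hp0 : 0 < p) :
    (h * ENNReal.ofReal (c ^ p)) ^ (1/p) = h ^ (1/p) * ENNReal.ofReal c := by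
  rw [ENNReal.mul_rpow_of_nonneg _ _ (by positivity), ← ENNReal.ofReal_rpow_of_pos hcpos,
    ← ENNReal.rpow_mul, mul_one_div_cancel hp0.ne', ENNReal.rpow_one]

lemma tendsto_rpow_mul_const {h : ℝ≥0∞} (h0 : h ≠ 0) (ht : h ≠ ⊤) (d : ℝ≥0∞) :
    Filter.Tendsto (fun p : ℝ => h ^ (1/p) * d) Filter.atTop (nhds d) := by
  simpa using ENNReal.Tendsto.mul_const (tendsto_rpow_one_div_nhds_one h0 ht)
    (Or.inl one_ne_zero)

theorem stmt_5 (n : ℕ) (Ω : Set (EuclideanSpace ℝ (Fin n))) (hΩ : Bornology.IsBounded Ω)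
    (δ : ℝ) (hδ : 0 < δ) (hδn : δ ≤ n) (f : EuclideanSpace ℝ (Fin n) → EReal) :
    Filter.Tendsto (fun p : ℝ => (choquet n δ Ω (fun x => (f x).abs ^ p)) ^ (1 / p))
      Filter.atTop
      (nhds (sInf {M : ℝ≥0∞ | hc n δ {x | x ∈ Ω ∧ M < (f x).abs} = 0})) := by
  set N := {M : ℝ≥0∞ | hc n δ {x | x ∈ Ω ∧ M < (f x).abs} = 0} with hNdef
  set S := sInf N with hSdef
  have hAlt : hc n δ Ω < ⊤ := hc_lt_top hδ hΩ
  by_cases hA0 : hc n δ Ω = 0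
  · have hS0 : S = 0 := by
      refine le_antisymm (sInf_le ?_) zero_le
      show hc n δ {x | x ∈ Ω ∧ (0:ℝ≥0∞) < (f x).abs} = 0
      exact le_antisymm (le_of_le_of_eq (hc_mono fun x hx => hx.1) hA0) zero_le
    rw [hS0]
    have hev : ∀ᶠ p : ℝ in Filter.atTop,
        (0:ℝ≥0∞) = (choquet n δ Ω (fun x => (f x).abs ^ p)) ^ (1 / p) := by
      filter_upwards [Filter.eventually_ge_atTop (1:ℝ)] with p hp
      have hp0 : 0 < p := lt_of_lt_of_le one_pos hp
      have hch : choquet n δ Ω (fun x => (f x).abs ^ p) = 0 := by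
        refine le_antisymm ?_ zero_le
        calc choquet n δ Ω (fun x => (f x).abs ^ p)
            ≤ ∫⁻ _ in Ioi (0:ℝ), 0 :=
              lintegral_mono fun t => le_of_le_of_eq (hc_mono fun x hx => hx.1) hA0
          _ = 0 := lintegral_zero
      rw [hch, ENNReal.zero_rpow_of_pos (by positivity)]
    exact Filter.Tendsto.congr' hev tendsto_const_nhds
  · refine tendsto_of_le_liminf_of_limsup_le ?_ ?_
    · -- S ≤ liminf
      refine le_of_forall_lt fun b hb => ?_
      obtain ⟨d, hbd, hdS⟩ := exists_between hb
      have hdtop : d ≠ ⊤ := (hdS.trans_le le_top).ne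
      have hd0 : (0:ℝ≥0∞) < d := lt_of_le_of_lt (zero_le : 0 ≤ b) hbd
      have hcd : ENNReal.ofReal d.toReal = d := ENNReal.ofReal_toReal hdtop
      have hcpos : 0 < d.toReal := ENNReal.toReal_pos hd0.ne' hdtop
      set h := hc n δ {x | x ∈ Ω ∧ ENNReal.ofReal d.toReal < (f x).abs} with hhdef
      have hne : h ≠ 0 := by
        intro hz
        have hdN : d ∈ N := by
          show hc n δ {x | x ∈ Ω ∧ d < (f x).abs} = 0
          rw [← hcd]; exact hz
        exact absurd (sInf_le hdN) (not_le.2 hdS)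
      have hhtop : h ≠ ⊤ := (lt_of_le_of_lt (hc_mono fun x hx => hx.1) hAlt).ne
      have hev : ∀ᶠ p : ℝ in Filter.atTop, h ^ (1/p) * d ≤
          (choquet n δ Ω (fun x => (f x).abs ^ p)) ^ (1 / p) := by
        filter_upwards [Filter.eventually_ge_atTop (1:ℝ)] with p hp
        have hp0 : 0 < p := lt_of_lt_of_le one_pos hp
        have key := le_choquet_rpow (n := n) (δ := δ) (Ω := Ω)
          (g := fun x => (f x).abs) hcpos hp0
        calc h ^ (1/p) * d = (h * ENNReal.ofReal (d.toReal ^ p)) ^ (1/p) := by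
              rw [mul_ofReal_rpow_aux hcpos hp0, hcd]
          _ ≤ (choquet n δ Ω (fun x => (f x).abs ^ p)) ^ (1 / p) :=
              ENNReal.rpow_le_rpow key (by positivity)
      have hlim := tendsto_rpow_mul_const hne hhtop d
      exact lt_of_lt_of_le hbd (hlim.liminf_eq ▸ Filter.liminf_le_liminf hev)
    · -- limsup ≤ S
      refine le_of_forall_gt_imp_ge_of_dense fun b hb => ?_
      obtain ⟨d, hSd, hdb⟩ := exists_between hb
      have hdtop : d ≠ ⊤ := (hdb.trans_le le_top).ne
      have hd0 : (0:ℝ≥0∞) < d := lt_of_le_of_lt (zero_le : 0 ≤ S) hSd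
      have hcd : ENNReal.ofReal d.toReal = d := ENNReal.ofReal_toReal hdtop
      have hcpos : 0 < d.toReal := ENNReal.toReal_pos hd0.ne' hdtop
      have hnull : hc n δ {x | x ∈ Ω ∧ ENNReal.ofReal d.toReal < (f x).abs} = 0 := by
        obtain ⟨M, hMN, hMd⟩ := sInf_lt_iff.mp hSd
        refine le_antisymm (le_of_le_of_eq (hc_mono ?_) hMN) zero_le
        rintro x ⟨hxΩ, hxc⟩
        have hMd' : M < ENNReal.ofReal d.toReal := by rw [hcd]; exact hMd
        exact ⟨hxΩ, lt_trans hMd' hxc⟩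
      have hev : ∀ᶠ p : ℝ in Filter.atTop,
          (choquet n δ Ω (fun x => (f x).abs ^ p)) ^ (1 / p) ≤
            (hc n δ Ω) ^ (1/p) * d := by
        filter_upwards [Filter.eventually_ge_atTop (1:ℝ)] with p hp
        have hp0 : 0 < p := lt_of_lt_of_le one_pos hp
        have key := choquet_rpow_le (n := n) (δ := δ) (Ω := Ω)
          (g := fun x => (f x).abs) hcpos hp0 hnull
        calc (choquet n δ Ω (fun x => (f x).abs ^ p)) ^ (1 / p)
            ≤ (hc n δ Ω * ENNReal.ofReal (d.toReal ^ p)) ^ (1/p) :=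
              ENNReal.rpow_le_rpow key (by positivity)
          _ = (hc n δ Ω) ^ (1/p) * d := by rw [mul_ofReal_rpow_aux hcpos hp0, hcd]
      calc Filter.limsup (fun p : ℝ => (choquet n δ Ω (fun x => (f x).abs ^ p)) ^ (1 / p))
            Filter.atTop ≤ Filter.limsup (fun p : ℝ => (hc n δ Ω) ^ (1/p) * d)
            Filter.atTop := Filter.limsup_le_limsup hev
        _ = d := (tendsto_rpow_mul_const hA0 hAlt.ne d).limsup_eq
        _ ≤ b := hdb.le
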